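/- Let (μ0^m)_{m∈ℕ} and (μ1^m)_{m∈ℕ} be sequences of probability measures on ℝ^d with finite first moments converging respectively to μ0 and μ1 in the Wasserstein-1 distance, with μ0^m ≤_cvx μ1^m for each m. Let μ^m be, for each m, a martingale coupling between μ0^m and μ1^m. Then the sequence (μ^m)_{m∈ℕ} is tight, and every weak limit point of (μ^m)_{m∈ℕ} is a martingale coupling between μ0 and μ1. -/

import Mathlib

open MeasureTheory Filter
open scoped ENNReal Topology

noncomputable section

abbrev Euc (d : ℕ) : Type := EuclideanSpace ℝ (Fin d)

/-- The Wasserstein "distance" of index `p`: infimum over couplings of the `p`-cost. -/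
def Wp {d : ℕ} (p : ℝ) (μ ν : Measure (Euc d)) : ℝ :=
  sInf { r | ∃ M : Measure (Euc d × Euc d), IsProbabilityMeasure M ∧ M.fst = μ ∧ M.snd = ν ∧
      r = (∫ z, ‖z.1 - z.2‖ ^ p ∂M) ^ (1/p) }

/-- Convex order `μ ≤_cvx ν` (tested on convex functions with linear growth). -/
def cvxOrder {d : ℕ} (μ ν : Measure (Euc d)) : Prop :=
  ∀ φ : Euc d → ℝ, ConvexOn ℝ Set.univ φ → (∃ C : ℝ, ∀ x, |φ x| ≤ C * (1 + ‖x‖)) →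
    ∫ x, φ x ∂μ ≤ ∫ x, φ x ∂ν

/-- Martingale coupling between `μ` and `ν`. -/
def IsMartingaleCoupling {d : ℕ} (M : Measure (Euc d × Euc d)) (μ ν : Measure (Euc d)) : Prop :=
  IsProbabilityMeasure M ∧ M.fst = μ ∧ M.snd = ν ∧
    ∀ φ : Euc d → Euc d, Measurable φ → (∃ C : ℝ, ∀ x, ‖φ x‖ ≤ C) →
      ∫ z, (inner ℝ (φ z.1) (z.2 - z.1) : ℝ) ∂M = 0

/-
W₁-convergence controls first-moment tails uniformly: beyond some index the tail
`∫ (‖x‖ - R)⁺ dμᵐ` is at most the tail of the limit plus `W₁(μᵐ, μ)`, because `(‖x‖ - R)⁺` is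
`1`-Lipschitz. By Markov's inequality the marginals, hence the couplings, are tight.

For a weak limit `L` of a subsequence, the marginals are the `W₁`-limits, since `W₁`-convergence
gives convergence of integrals of Lipschitz functions and these determine finite measures. For a
bounded continuous `f`, `∫ f(x) (y - x)ᵢ dμᵐ = 0`; the integrand is unbounded, but truncating
`(y - x)ᵢ` costs only the (uniformly small) tails of the marginals, so the identity passes to `L`.
Finally, the signed measure `A ↦ ∫ 1_A(x) (y - x)ᵢ dL` annihilates bounded continuous functions,
hence vanishes, which gives the martingale identity for all bounded measurable test functions.
-/

open scoped NNReal BoundedContinuousFunction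

theorem ext_of_forall_lipschitz_integral_eq {X : Type*} [PseudoEMetricSpace X] [MeasurableSpace X]
    [BorelSpace X] {μ ν : Measure X} [IsFiniteMeasure μ] [IsFiniteMeasure ν]
    (h : ∀ (K : ℝ≥0) (f : X → ℝ), LipschitzWith K f → (∃ C, ∀ x, |f x| ≤ C) →
      ∫ x, f x ∂μ = ∫ x, f x ∂ν) : μ = ν := by
  have hclosed : ∀ F : Set X, IsClosed F → μ F = ν F := by
    intro F hF
    have hδ : ∀ n : ℕ, (0 : ℝ) < 1 / (n + 1) := fun n => by positivity
    have heq : ∀ n, ∫ x, (thickenedIndicator (hδ n) F x : ℝ) ∂μ =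
        ∫ x, (thickenedIndicator (hδ n) F x : ℝ) ∂ν := fun n =>
      h _ _ ((LipschitzWith.subtype_val _).comp (lipschitzWith_thickenedIndicator (hδ n) F))
        ⟨1, fun x => by simpa using thickenedIndicator_le_one (hδ n) F x⟩
    have hμ := tendsto_integral_thickenedIndicator_of_isClosed μ hF hδ
      tendsto_one_div_add_atTop_nhds_zero_nat
    have hν := tendsto_integral_thickenedIndicator_of_isClosed ν hF hδ
      tendsto_one_div_add_atTop_nhds_zero_nat
    exact (measureReal_eq_measureReal_iff).1 (tendsto_nhds_unique (hμ.congr heq) hν)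
  exact ext_of_generate_finite _ (BorelSpace.measurable_eq.trans borel_eq_generateFrom_isClosed)
    isPiSystem_isClosed hclosed (hclosed _ isClosed_univ)

section Tails

variable {E : Type*} [NormedAddCommGroup E]

theorem lipschitzWith_one_tail (R : ℝ) : LipschitzWith 1 fun x : E => max (‖x‖ - R) 0 :=
  (LipschitzWith.of_dist_le_mul fun x y => by
    simpa [Real.dist_eq, dist_eq_norm] using abs_norm_sub_norm_le x y).max_const 0

variable [MeasurableSpace E] [OpensMeasurableSpace E]

theorem LipschitzWith.integrable_of_integrable_norm {K : ℝ≥0} {f : E → ℝ} {ρ : Measure E}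
    [IsFiniteMeasure ρ] (hf : LipschitzWith K f) (hρ : Integrable (fun x => ‖x‖) ρ) :
    Integrable f ρ := by
  refine ((integrable_const ‖f 0‖).add (hρ.const_mul K)).mono' hf.continuous.aestronglyMeasurable
    (ae_of_all _ fun x => ?_)
  have := hf.dist_le_mul x 0
  rw [dist_eq_norm, dist_zero_right] at this
  show ‖f x‖ ≤ ‖f 0‖ + K * ‖x‖
  linarith [norm_sub_norm_le (f x) (f 0)]

theorem tendsto_integral_tail {ρ : Measure E} (hρ : Integrable (fun x => ‖x‖) ρ) :
    Tendsto (fun R : ℝ => ∫ x, max (‖x‖ - R) 0 ∂ρ) atTop (𝓝 0) := by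
  have hdom : ∀ᶠ R : ℝ in atTop, ∀ᵐ x ∂ρ, ‖max (‖x‖ - R) 0‖ ≤ ‖x‖ :=
    (eventually_ge_atTop 0).mono fun R hR => ae_of_all _ fun x => by
      rw [Real.norm_of_nonneg (le_max_right _ _)]
      exact max_le (by linarith) (norm_nonneg x)
  have hlim : ∀ x : E, Tendsto (fun R : ℝ => max (‖x‖ - R) 0) atTop (𝓝 0) := fun x =>
    tendsto_const_nhds.congr' <| (eventually_ge_atTop ‖x‖).mono fun R hR =>
      (max_eq_right (by linarith)).symm
  simpa using tendsto_integral_filter_of_dominated_convergence _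
    (Eventually.of_forall fun R => (lipschitzWith_one_tail R).continuous.aestronglyMeasurable)
    hdom hρ (ae_of_all _ hlim)

theorem measure_compl_closedBall_le_integral_tail {ρ : Measure E} [IsFiniteMeasure ρ]
    (hρ : Integrable (fun x => ‖x‖) ρ) (R : ℝ) :
    ρ (Metric.closedBall 0 (R + 1))ᶜ ≤ ENNReal.ofReal (∫ x, max (‖x‖ - R) 0 ∂ρ) := by
  have hmarkov := mul_meas_ge_le_integral_of_nonneg (f := fun x => max (‖x‖ - R) 0)
    (ae_of_all _ fun x => le_max_right _ _)
    ((lipschitzWith_one_tail R).integrable_of_integrable_norm hρ) 1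
  rw [one_mul] at hmarkov
  calc ρ (Metric.closedBall 0 (R + 1))ᶜ ≤ ρ {x : E | 1 ≤ max (‖x‖ - R) 0} := by
        refine measure_mono fun x hx => ?_
        simp only [Set.mem_compl_iff, Metric.mem_closedBall, dist_zero_right, not_le] at hx
        exact le_max_of_le_left (show 1 ≤ ‖x‖ - R by linarith)
    _ = ENNReal.ofReal (ρ.real {x : E | 1 ≤ max (‖x‖ - R) 0}) := (ofReal_measureReal).symm
    _ ≤ ENNReal.ofReal (∫ x, max (‖x‖ - R) 0 ∂ρ) := ENNReal.ofReal_le_ofReal hmarkov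

theorem isTightMeasureSet_range_of_tail [ProperSpace E] {ν : ℕ → Measure E}
    [∀ n, IsFiniteMeasure (ν n)] (hν : ∀ n, Integrable (fun x => ‖x‖) (ν n))
    (htail : ∀ ε > 0, ∀ᶠ R in atTop, ∀ n, ∫ x, max (‖x‖ - R) 0 ∂(ν n) ≤ ε) :
    IsTightMeasureSet (Set.range ν) := by
  rw [isTightMeasureSet_iff_exists_isCompact_measure_compl_le]
  intro ε hε
  obtain ⟨δ, -, hδ, hδε⟩ := ENNReal.lt_iff_exists_real_btwn.1 hε
  obtain ⟨R, hR⟩ := (htail δ (ENNReal.ofReal_pos.1 hδ)).exists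
  refine ⟨Metric.closedBall 0 (R + 1), isCompact_closedBall _ _, ?_⟩
  rintro _ ⟨n, rfl⟩
  exact (measure_compl_closedBall_le_integral_tail (hν n) R).trans
    ((ENNReal.ofReal_le_ofReal (hR n)).trans hδε.le)

end Tails

section Couplings

variable {E F : Type*} [NormedAddCommGroup E] [MeasurableSpace E] [NormedAddCommGroup F]
  [MeasurableSpace F]

theorem integrable_norm_fst_add_norm_snd {M : Measure (E × F)}
    (h0 : Integrable (fun x => ‖x‖) M.fst) (h1 : Integrable (fun y => ‖y‖) M.snd) :
    Integrable (fun z : E × F => ‖z.1‖ + ‖z.2‖) M :=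
  (h0.comp_measurable measurable_fst).add (h1.comp_measurable measurable_snd)

variable [BorelSpace E] [SecondCountableTopology E]

theorem abs_integral_fst_sub_integral_snd_le {M : Measure (E × E)} [IsFiniteMeasure M]
    (h0 : Integrable (fun x => ‖x‖) M.fst) (h1 : Integrable (fun y => ‖y‖) M.snd)
    {K : ℝ≥0} {f : E → ℝ} (hf : LipschitzWith K f) :
    |∫ x, f x ∂M.fst - ∫ y, f y ∂M.snd| ≤ K * ∫ z, ‖z.1 - z.2‖ ∂M := by
  have hcost : Integrable (fun z : E × E => ‖z.1 - z.2‖) M :=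
    (integrable_norm_fst_add_norm_snd h0 h1).mono'
      (continuous_fst.sub continuous_snd).norm.aestronglyMeasurable (ae_of_all _ fun z => (norm_norm _).trans_le (norm_sub_le _ _))
  have hf0 : Integrable (fun z : E × E => f z.1) M :=
    (hf.integrable_of_integrable_norm h0).comp_measurable measurable_fst
  have hf1 : Integrable (fun z : E × E => f z.2) M :=
    (hf.integrable_of_integrable_norm h1).comp_measurable measurable_snd
  rw [Measure.fst, Measure.snd, integral_map measurable_fst.aemeasurable
    hf.continuous.aestronglyMeasurable, integral_map measurable_snd.aemeasurable
    hf.continuous.aestronglyMeasurable, ← integral_sub hf0 hf1, ← integral_const_mul]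
  refine abs_integral_le_integral_abs.trans (integral_mono_of_nonneg
    (ae_of_all _ fun _ => abs_nonneg _) (hcost.const_mul _) (ae_of_all _ fun z => ?_))
  simpa [Real.dist_eq, dist_eq_norm] using hf.dist_le_mul z.1 z.2

end Couplings

section Wasserstein

variable {d : ℕ}

theorem abs_integral_sub_le_mul_Wp {μ ν : Measure (Euc d)} [IsProbabilityMeasure μ]
    [IsProbabilityMeasure ν] (hμ : Integrable (fun x => ‖x‖) μ)
    (hν : Integrable (fun x => ‖x‖) ν) {K : ℝ≥0} {f : Euc d → ℝ} (hf : LipschitzWith K f) :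
    |∫ x, f x ∂μ - ∫ x, f x ∂ν| ≤ K * Wp 1 μ ν := by
  rw [Wp, ← smul_eq_mul, ← Real.sInf_smul_of_nonneg K.coe_nonneg]
  refine le_csInf (Set.Nonempty.smul_set
    ⟨_, μ.prod ν, inferInstance, Measure.fst_prod, Measure.snd_prod, rfl⟩) ?_
  rintro _ ⟨_, ⟨M, hM, rfl, rfl, rfl⟩, rfl⟩
  simpa using abs_integral_fst_sub_integral_snd_le hμ hν hf

variable {ν : Measure (Euc d)} [IsProbabilityMeasure ν] {νs : ℕ → Measure (Euc d)}
  [∀ n, IsProbabilityMeasure (νs n)]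

theorem tendsto_integral_of_tendsto_Wp (hν : Integrable (fun x => ‖x‖) ν)
    (hνs : ∀ n, Integrable (fun x => ‖x‖) (νs n))
    (hW : Tendsto (fun n => Wp 1 (νs n) ν) atTop (𝓝 0)) {K : ℝ≥0} {f : Euc d → ℝ}
    (hf : LipschitzWith K f) :
    Tendsto (fun n => ∫ x, f x ∂(νs n)) atTop (𝓝 (∫ x, f x ∂ν)) := by
  rw [tendsto_iff_dist_tendsto_zero]
  exact squeeze_zero (fun n => dist_nonneg)
    (fun n => abs_integral_sub_le_mul_Wp (hνs n) hν hf) (by simpa using hW.const_mul (K : ℝ))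

theorem eventually_forall_integral_tail_le (hν : Integrable (fun x => ‖x‖) ν)
    (hνs : ∀ n, Integrable (fun x => ‖x‖) (νs n))
    (hW : Tendsto (fun n => Wp 1 (νs n) ν) atTop (𝓝 0)) {ε : ℝ} (hε : 0 < ε) :
    ∀ᶠ R in atTop, ∀ n, ∫ x, max (‖x‖ - R) 0 ∂(νs n) ≤ ε := by
  obtain ⟨N, hN⟩ := eventually_atTop.1 (hW.eventually (ge_mem_nhds (half_pos hε)))
  have hfirst : ∀ᶠ R in atTop, ∀ n ∈ Finset.range N, ∫ x, max (‖x‖ - R) 0 ∂(νs n) ≤ ε :=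
    (Finset.range N).eventually_all.2 fun n _ =>
      (tendsto_integral_tail (hνs n)).eventually (ge_mem_nhds hε)
  filter_upwards [hfirst, (tendsto_integral_tail hν).eventually (ge_mem_nhds (half_pos hε))]
    with R hR hRν n
  rcases lt_or_ge n N with hn | hn
  · exact hR n (Finset.mem_range.2 hn)
  · have := abs_integral_sub_le_mul_Wp (hνs n) hν (lipschitzWith_one_tail R)
    rw [NNReal.coe_one, one_mul, abs_le] at this
    linarith [hN n hn]

end Wasserstein

section WeakLimits

variable {X : Type*} [MeasurableSpace X] [TopologicalSpace X] {μs : ℕ → Measure X}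
  {L : Measure X}

theorem isProbabilityMeasure_of_tendsto_integral [∀ n, IsProbabilityMeasure (μs n)]
    (hconv : ∀ f : X →ᵇ ℝ, Tendsto (fun n => ∫ x, f x ∂(μs n)) atTop (𝓝 (∫ x, f x ∂L))) :
    IsProbabilityMeasure L := by
  have h := hconv 1
  simp only [BoundedContinuousFunction.coe_one, Pi.one_apply, integral_const, smul_eq_mul,
    mul_one, probReal_univ] at h
  exact ⟨(ENNReal.toReal_eq_one_iff _).1 (tendsto_nhds_unique tendsto_const_nhds h).symm⟩

variable [OpensMeasurableSpace X]

theorem map_eq_of_tendsto_integral {Y : Type*} [PseudoEMetricSpace Y] [MeasurableSpace Y]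
    [BorelSpace Y] [IsFiniteMeasure L] {π : X → Y} (hπ : Continuous π) {ν : Measure Y}
    [IsFiniteMeasure ν]
    (hconv : ∀ f : X →ᵇ ℝ, Tendsto (fun n => ∫ x, f x ∂(μs n)) atTop (𝓝 (∫ x, f x ∂L)))
    (hν : ∀ (K : ℝ≥0) (f : Y → ℝ), LipschitzWith K f →
      Tendsto (fun n => ∫ y, f y ∂(μs n).map π) atTop (𝓝 (∫ y, f y ∂ν))) :
    L.map π = ν := by
  refine ext_of_forall_lipschitz_integral_eq fun K f hf ⟨C, hC⟩ => ?_
  have hfπ : Continuous (f ∘ π) := hf.continuous.comp hπ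
  have hlim := hconv (BoundedContinuousFunction.ofNormedAddCommGroup _ hfπ C fun x => (hC (π x)))
  simp only [BoundedContinuousFunction.coe_ofNormedAddCommGroup] at hlim
  have hmap : ∀ ρ : Measure X, ∫ y, f y ∂ρ.map π = ∫ x, f (π x) ∂ρ := fun ρ =>
    integral_map hπ.measurable.aemeasurable hf.continuous.aestronglyMeasurable
  have hlimν := hν K f hf
  simp only [hmap] at hlimν ⊢
  exact tendsto_nhds_unique hlim hlimν

theorem tendsto_integral_of_forall_exists_approx [∀ n, IsFiniteMeasure (μs n)]
    [IsFiniteMeasure L] {h : X → ℝ} (hμs : ∀ n, Integrable h (μs n)) (hL : Integrable h L)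
    (hconv : ∀ f : X →ᵇ ℝ, Tendsto (fun n => ∫ x, f x ∂(μs n)) atTop (𝓝 (∫ x, f x ∂L)))
    (happrox : ∀ ε > 0, ∃ g : X →ᵇ ℝ,
      (∀ n, ∫ x, |h x - g x| ∂(μs n) ≤ ε) ∧ ∫ x, |h x - g x| ∂L ≤ ε) :
    Tendsto (fun n => ∫ x, h x ∂(μs n)) atTop (𝓝 (∫ x, h x ∂L)) := by
  have hdist : ∀ (ρ : Measure X) [IsFiniteMeasure ρ], Integrable h ρ → ∀ g : X →ᵇ ℝ,
      dist (∫ x, h x ∂ρ) (∫ x, g x ∂ρ) ≤ ∫ x, |h x - g x| ∂ρ := fun ρ _ hρ g => by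
    rw [Real.dist_eq, ← integral_sub hρ (g.integrable ρ)]
    exact abs_integral_le_integral_abs
  rw [Metric.tendsto_atTop]
  intro ε hε
  obtain ⟨g, hgμs, hgL⟩ := happrox (ε / 4) (by positivity)
  obtain ⟨N, hN⟩ := Metric.tendsto_atTop.1 (hconv g) (ε / 4) (by positivity)
  refine ⟨N, fun n hn => ?_⟩
  have := dist_triangle4 (∫ x, h x ∂(μs n)) (∫ x, g x ∂(μs n)) (∫ x, g x ∂L) (∫ x, h x ∂L)
  linarith [hdist (μs n) (hμs n) g, hgμs n, hN n hn, hdist L hL g,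
    dist_comm (∫ x, g x ∂L) (∫ x, h x ∂L)]

end WeakLimits

theorem integral_mul_eq_zero_of_forall_boundedContinuous {X Y : Type*} [MeasurableSpace X] [TopologicalSpace X]
    [HasOuterApproxClosed X] [BorelSpace X] [MeasurableSpace Y] {M : Measure (X × Y)}
    {g : X × Y → ℝ} (hg : Integrable g M)
    (h : ∀ f : X →ᵇ ℝ, ∫ z, f z.1 * g z ∂M = 0) {f : X → ℝ} (hf : Measurable f) {C : ℝ}
    (hC : ∀ x, |f x| ≤ C) : ∫ z, f z.1 * g z ∂M = 0 := by
  let ρ : (X × Y → ℝ) → Measure X := fun u =>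
    (M.withDensity fun z => ENNReal.ofReal (u z)).map Prod.fst
  have : IsFiniteMeasure (ρ g) := by
    have := isFiniteMeasure_withDensity_ofReal hg.2
    infer_instance
  have : IsFiniteMeasure (ρ (-g)) := by
    have := isFiniteMeasure_withDensity_ofReal hg.neg.2
    infer_instance
  have hρ : ∀ {f : X → ℝ} {C : ℝ}, Measurable f → (∀ x, |f x| ≤ C) →
      ∫ x, f x ∂ρ g - ∫ x, f x ∂ρ (-g) = ∫ z, f z.1 * g z ∂M := by
    intro f C hf hC
    have hpart : ∀ u : X × Y → ℝ, Integrable u M →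
        ∫ x, f x ∂ρ u = ∫ z, f z.1 * max (u z) 0 ∂M := fun u hu => by
      rw [integral_map measurable_fst.aemeasurable hf.aestronglyMeasurable,
        integral_withDensity_eq_integral_toReal_smul₀ hu.aemeasurable.ennreal_ofReal
          (ae_of_all _ fun _ => ENNReal.ofReal_lt_top)]
      simp_rw [ENNReal.toReal_ofReal', smul_eq_mul, mul_comm]
    have hint : ∀ u : X × Y → ℝ, Integrable u M → Integrable (fun z => f z.1 * max (u z) 0) M :=
      fun u hu => hu.pos_part.bdd_mul (hf.comp measurable_fst).aestronglyMeasurable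
        (ae_of_all _ fun z => (Real.norm_eq_abs _).trans_le (hC z.1))
    rw [hpart g hg, hpart (-g) hg.neg, ← integral_sub (hint g hg) (hint (-g) hg.neg)]
    simp_rw [← mul_sub, Pi.neg_apply, max_zero_sub_eq_self]
  have hρeq : ρ g = ρ (-g) := ext_of_forall_integral_eq_of_IsFiniteMeasure fun f =>
    sub_eq_zero.1 ((hρ f.continuous.measurable f.norm_coe_le_norm).trans (h f))
  rw [← hρ hf hC, hρeq, sub_self]

theorem abs_sub_clamp_le (R t : ℝ) : |t - max (-R) (min R t)| ≤ max (|t| - R) 0 := by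
  grind [abs_le, le_abs_self, neg_abs_le]

theorem abs_clamp_le (R t : ℝ) : |max (-R) (min R t)| ≤ |R| := by
  grind [abs_le, le_abs_self, neg_abs_le]

section Martingale

variable {d : ℕ}

theorem abs_apply_le_norm (x : Euc d) (i : Fin d) : |x i| ≤ ‖x‖ := by
  simpa using PiLp.norm_apply_le x i

theorem integrable_coord_snd_sub_fst {M : Measure (Euc d × Euc d)}
    (h0 : Integrable (fun x => ‖x‖) M.fst) (h1 : Integrable (fun y => ‖y‖) M.snd) (i : Fin d) :
    Integrable (fun z : Euc d × Euc d => (z.2 - z.1) i) M := by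
  have hcont : Continuous fun z : Euc d × Euc d => (z.2 - z.1) i :=
    (EuclideanSpace.proj i).continuous.comp (continuous_snd.sub continuous_fst)
  refine (integrable_norm_fst_add_norm_snd h0 h1).mono' hcont.aestronglyMeasurable
    (ae_of_all _ fun z => ?_)
  rw [Real.norm_eq_abs, add_comm]
  exact (abs_apply_le_norm _ i).trans (norm_sub_le _ _)

theorem integrable_mul_coord {M : Measure (Euc d × Euc d)}
    (h0 : Integrable (fun x => ‖x‖) M.fst) (h1 : Integrable (fun y => ‖y‖) M.snd)
    {f : Euc d → ℝ} {C : ℝ} (hf : Measurable f) (hC : ∀ x, |f x| ≤ C) (i : Fin d) :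
    Integrable (fun z : Euc d × Euc d => f z.1 * (z.2 - z.1) i) M :=
  (integrable_coord_snd_sub_fst h0 h1 i).bdd_mul (hf.comp measurable_fst).aestronglyMeasurable
    (ae_of_all _ fun z => (Real.norm_eq_abs _).trans_le (hC z.1))

theorem IsMartingaleCoupling.integral_mul_coord_eq_zero {M : Measure (Euc d × Euc d)}
    {μ ν : Measure (Euc d)} (hM : IsMartingaleCoupling M μ ν) {f : Euc d → ℝ} {C : ℝ}
    (hf : Measurable f) (hC : ∀ x, |f x| ≤ C) (i : Fin d) :
    ∫ z, f z.1 * (z.2 - z.1) i ∂M = 0 := by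
  have h := hM.2.2.2 (fun x => f x • EuclideanSpace.single i 1) (hf.smul_const _)
    ⟨C, fun x => by simpa [norm_smul] using hC x⟩
  simpa [real_inner_smul_left, EuclideanSpace.inner_single_left] using h

theorem isMartingaleCoupling_of_integral_mul_coord {M : Measure (Euc d × Euc d)}
    {μ ν : Measure (Euc d)} [IsProbabilityMeasure M] (hMμ : M.fst = μ) (hMν : M.snd = ν)
    (hμ : Integrable (fun x => ‖x‖) μ) (hν : Integrable (fun x => ‖x‖) ν)
    (h : ∀ (i : Fin d) (f : Euc d → ℝ) (C : ℝ), Measurable f → (∀ x, |f x| ≤ C) →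
      ∫ z, f z.1 * (z.2 - z.1) i ∂M = 0) :
    IsMartingaleCoupling M μ ν := by
  refine ⟨inferInstance, hMμ, hMν, fun ψ hψ ⟨C, hC⟩ => ?_⟩
  have hψi : ∀ i, Measurable fun x => ψ x i := fun i =>
    (EuclideanSpace.proj i).continuous.measurable.comp hψ
  have hψC : ∀ i x, |ψ x i| ≤ C := fun i x => (abs_apply_le_norm _ i).trans (hC x)
  subst hMμ hMν
  simp_rw [PiLp.inner_apply, RCLike.inner_apply, conj_trivial, mul_comm]
  rw [integral_finsetSum _ fun i _ => integrable_mul_coord hμ hν (hψi i) (hψC i) i]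
  exact Finset.sum_eq_zero fun i _ => h i _ C (hψi i) (hψC i)

theorem integral_abs_mul_coord_sub_clamp_le {M : Measure (Euc d × Euc d)} [IsFiniteMeasure M]
    (h0 : Integrable (fun x => ‖x‖) M.fst) (h1 : Integrable (fun y => ‖y‖) M.snd)
    {f : Euc d → ℝ} {C : ℝ} (hC : ∀ x, |f x| ≤ C) (i : Fin d) (R : ℝ) :
    ∫ z, |f z.1 * (z.2 - z.1) i - f z.1 * max (-(2 * R)) (min (2 * R) ((z.2 - z.1) i))| ∂M
      ≤ C * (∫ x, max (‖x‖ - R) 0 ∂M.fst + ∫ y, max (‖y‖ - R) 0 ∂M.snd) := by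
  have hC0 : 0 ≤ C := (abs_nonneg _).trans (hC 0)
  have ht0 : Integrable (fun z : Euc d × Euc d => max (‖z.1‖ - R) 0) M :=
    ((lipschitzWith_one_tail R).integrable_of_integrable_norm h0).comp_measurable measurable_fst
  have ht1 : Integrable (fun z : Euc d × Euc d => max (‖z.2‖ - R) 0) M :=
    ((lipschitzWith_one_tail R).integrable_of_integrable_norm h1).comp_measurable measurable_snd
  rw [Measure.fst, Measure.snd, integral_map measurable_fst.aemeasurable
    (lipschitzWith_one_tail R).continuous.aestronglyMeasurable, integral_map
    measurable_snd.aemeasurable (lipschitzWith_one_tail R).continuous.aestronglyMeasurable,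
    ← integral_add ht0 ht1, ← integral_const_mul]
  refine integral_mono_of_nonneg (ae_of_all _ fun _ => abs_nonneg _) ((ht0.add ht1).const_mul _)
    (ae_of_all _ fun z => ?_)
  have hcoord : |(z.2 - z.1) i| ≤ ‖z.1‖ + ‖z.2‖ :=
    (abs_apply_le_norm _ i).trans ((norm_sub_le _ _).trans_eq (add_comm _ _))
  have htail : max (|(z.2 - z.1) i| - 2 * R) 0 ≤ max (‖z.1‖ - R) 0 + max (‖z.2‖ - R) 0 := by
    refine max_le ?_ (by positivity)
    linarith [le_max_left (‖z.1‖ - R) 0, le_max_left (‖z.2‖ - R) 0]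
  simp only [← mul_sub, abs_mul]
  exact mul_le_mul (hC _) ((abs_sub_clamp_le _ _).trans htail) (abs_nonneg _) hC0

end Martingale

section Limit

variable {d : ℕ} {μ0s μ1s : ℕ → Measure (Euc d)} {Ms : ℕ → Measure (Euc d × Euc d)}
  {L : Measure (Euc d × Euc d)}

theorem integral_mul_coord_eq_zero_of_tendsto [IsFiniteMeasure L]
    (hMs : ∀ n, IsMartingaleCoupling (Ms n) (μ0s n) (μ1s n))
    (hμ0s : ∀ n, Integrable (fun x => ‖x‖) (μ0s n)) (hμ1s : ∀ n, Integrable (fun x => ‖x‖) (μ1s n))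
    (htail0 : ∀ ε > 0, ∀ᶠ R in atTop, ∀ n, ∫ x, max (‖x‖ - R) 0 ∂(μ0s n) ≤ ε)
    (htail1 : ∀ ε > 0, ∀ᶠ R in atTop, ∀ n, ∫ x, max (‖x‖ - R) 0 ∂(μ1s n) ≤ ε)
    (hL0 : Integrable (fun x => ‖x‖) L.fst) (hL1 : Integrable (fun x => ‖x‖) L.snd)
    (hconv : ∀ f : Euc d × Euc d →ᵇ ℝ,
      Tendsto (fun n => ∫ z, f z ∂(Ms n)) atTop (𝓝 (∫ z, f z ∂L)))
    (f : Euc d →ᵇ ℝ) (i : Fin d) :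
    ∫ z, f z.1 * (z.2 - z.1) i ∂L = 0 := by
  have : ∀ n, IsProbabilityMeasure (Ms n) := fun n => (hMs n).1
  have hfC : ∀ x, |f x| ≤ ‖f‖ := f.norm_coe_le_norm
  have hfst : ∀ n, Integrable (fun x => ‖x‖) (Ms n).fst := fun n => (hMs n).2.1 ▸ hμ0s n
  have hsnd : ∀ n, Integrable (fun x => ‖x‖) (Ms n).snd := fun n => (hMs n).2.2.1 ▸ hμ1s n
  refine tendsto_nhds_unique (tendsto_integral_of_forall_exists_approx
    (fun n => integrable_mul_coord (hfst n) (hsnd n) f.continuous.measurable hfC i)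
    (integrable_mul_coord hL0 hL1 f.continuous.measurable hfC i) hconv fun ε hε => ?_)
    (tendsto_const_nhds.congr fun n =>
      ((hMs n).integral_mul_coord_eq_zero f.continuous.measurable hfC i).symm)
  set δ := ε / (2 * (‖f‖ + 1))
  have hδ : 0 < δ := by positivity
  have hfδ : ‖f‖ * (δ + δ) ≤ ε := by
    rw [← two_mul, mul_div_assoc', mul_div_assoc', div_le_iff₀ (by positivity)]
    nlinarith [norm_nonneg f]
  obtain ⟨R, hR0, hR1, hRL0, hRL1⟩ := ((htail0 δ hδ).and ((htail1 δ hδ).and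
    (((tendsto_integral_tail hL0).eventually (ge_mem_nhds hδ)).and
    ((tendsto_integral_tail hL1).eventually (ge_mem_nhds hδ))))).exists
  have hg : Continuous fun z : Euc d × Euc d =>
      f z.1 * max (-(2 * R)) (min (2 * R) ((z.2 - z.1) i)) := by fun_prop
  refine ⟨.ofNormedAddCommGroup _ hg (‖f‖ * |2 * R|) fun z => ?_, fun n => ?_, ?_⟩
  · rw [Real.norm_eq_abs, abs_mul]
    exact mul_le_mul (hfC _) (abs_clamp_le _ _) (abs_nonneg _) (norm_nonneg f)
  · refine (integral_abs_mul_coord_sub_clamp_le (hfst n) (hsnd n) hfC i R).trans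
      (le_trans ?_ hfδ)
    rw [(hMs n).2.1, (hMs n).2.2.1]
    gcongr
    exacts [hR0 n, hR1 n]
  · exact (integral_abs_mul_coord_sub_clamp_le hL0 hL1 hfC i R).trans
      ((mul_le_mul_of_nonneg_left (add_le_add hRL0 hRL1) (norm_nonneg f)).trans hfδ)

theorem isMartingaleCoupling_of_tendsto {μ0 μ1 : Measure (Euc d)} [IsProbabilityMeasure μ0]
    [IsProbabilityMeasure μ1] (hμ0 : Integrable (fun x => ‖x‖) μ0)
    (hμ1 : Integrable (fun x => ‖x‖) μ1) [∀ n, IsProbabilityMeasure (μ0s n)]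
    [∀ n, IsProbabilityMeasure (μ1s n)] (hμ0s : ∀ n, Integrable (fun x => ‖x‖) (μ0s n))
    (hμ1s : ∀ n, Integrable (fun x => ‖x‖) (μ1s n))
    (hW0 : Tendsto (fun n => Wp 1 (μ0s n) μ0) atTop (𝓝 0))
    (hW1 : Tendsto (fun n => Wp 1 (μ1s n) μ1) atTop (𝓝 0))
    (hMs : ∀ n, IsMartingaleCoupling (Ms n) (μ0s n) (μ1s n))
    (hconv : ∀ f : Euc d × Euc d →ᵇ ℝ,
      Tendsto (fun n => ∫ z, f z ∂(Ms n)) atTop (𝓝 (∫ z, f z ∂L))) :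
    IsMartingaleCoupling L μ0 μ1 := by
  have : ∀ n, IsProbabilityMeasure (Ms n) := fun n => (hMs n).1
  have : IsProbabilityMeasure L := isProbabilityMeasure_of_tendsto_integral hconv
  have hfst : L.fst = μ0 := map_eq_of_tendsto_integral continuous_fst hconv fun K f hf =>
    (tendsto_integral_of_tendsto_Wp hμ0 hμ0s hW0 hf).congr fun n => by rw [← (hMs n).2.1]; rfl
  have hsnd : L.snd = μ1 := map_eq_of_tendsto_integral continuous_snd hconv fun K f hf =>
    (tendsto_integral_of_tendsto_Wp hμ1 hμ1s hW1 hf).congr fun n => by rw [← (hMs n).2.2.1]; rfl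
  refine isMartingaleCoupling_of_integral_mul_coord hfst hsnd hμ0 hμ1 fun i f C hf hC => ?_
  exact integral_mul_eq_zero_of_forall_boundedContinuous
    (integrable_coord_snd_sub_fst (hfst ▸ hμ0) (hsnd ▸ hμ1) i)
    (fun g => integral_mul_coord_eq_zero_of_tendsto hMs hμ0s hμ1s
      (fun ε hε => eventually_forall_integral_tail_le hμ0 hμ0s hW0 hε)
      (fun ε hε => eventually_forall_integral_tail_le hμ1 hμ1s hW1 hε)
      (hfst ▸ hμ0) (hsnd ▸ hμ1) hconv g i) hf hC

end Limit

theorem stmt2_general {d : ℕ}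
    (μ0 μ1 : Measure (Euc d)) [IsProbabilityMeasure μ0] [IsProbabilityMeasure μ1]
    (hm0 : Integrable (fun x => ‖x‖) μ0) (hm1 : Integrable (fun x => ‖x‖) μ1)
    (μ0m μ1m : ℕ → Measure (Euc d))
    (hP0 : ∀ m, IsProbabilityMeasure (μ0m m)) (hP1 : ∀ m, IsProbabilityMeasure (μ1m m))
    (hmom0 : ∀ m, Integrable (fun x => ‖x‖) (μ0m m))
    (hmom1 : ∀ m, Integrable (fun x => ‖x‖) (μ1m m))
    (hW0 : Tendsto (fun m => Wp 1 (μ0m m) μ0) atTop (𝓝 0))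
    (hW1 : Tendsto (fun m => Wp 1 (μ1m m) μ1) atTop (𝓝 0))
    (μm : ℕ → Measure (Euc d × Euc d))
    (hμm : ∀ m, IsMartingaleCoupling (μm m) (μ0m m) (μ1m m)) :
    (∀ ε : ℝ, 0 < ε → ∃ K : Set (Euc d × Euc d), IsCompact K ∧
        ∀ m, μm m Kᶜ ≤ ENNReal.ofReal ε)
    ∧ ∀ (L : Measure (Euc d × Euc d)) (φ : ℕ → ℕ), StrictMono φ →
        (∀ f : BoundedContinuousFunction (Euc d × Euc d) ℝ,
          Tendsto (fun m => ∫ z, f z ∂(μm (φ m))) atTop (𝓝 (∫ z, f z ∂L))) →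
        IsMartingaleCoupling L μ0 μ1 := by
  refine ⟨fun ε hε => ?_, fun L φ hφ hconv => ?_⟩
  · have hfst : Measure.fst ∘ μm = μ0m := funext fun m => (hμm m).2.1
    have hsnd : Measure.snd ∘ μm = μ1m := funext fun m => (hμm m).2.2.1
    have htight : IsTightMeasureSet (Set.range μm) := by
      refine IsTightMeasureSet.prodMk ?_ ?_
      · rw [← Set.range_comp, hfst]
        exact isTightMeasureSet_range_of_tail hmom0
          fun ε hε => eventually_forall_integral_tail_le hm0 hmom0 hW0 hε
      · rw [← Set.range_comp, hsnd]
        exact isTightMeasureSet_range_of_tail hmom1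
          fun ε hε => eventually_forall_integral_tail_le hm1 hmom1 hW1 hε
    obtain ⟨K, hK, hKμm⟩ := isTightMeasureSet_iff_exists_isCompact_measure_compl_le.1 htight _
      (ENNReal.ofReal_pos.2 hε)
    exact ⟨K, hK, fun m => hKμm _ ⟨m, rfl⟩⟩
  · have hφ' := hφ.tendsto_atTop
    exact isMartingaleCoupling_of_tendsto hm0 hm1 (fun m => hmom0 (φ m)) (fun m => hmom1 (φ m))
      (hW0.comp hφ') (hW1.comp hφ') (fun m => hμm (φ m)) hconv

/-- If `μ0^m → μ0` and `μ1^m → μ1` in `W₁` with `μ0^m ≤_cvx μ1^m`, and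
`μ^m` is a martingale coupling of `(μ0^m, μ1^m)` for each `m`, then `(μ^m)` is tight and
every weak limit point of `(μ^m)` is a martingale coupling between `μ0` and `μ1`. -/
theorem stmt2 {d : ℕ}
    (μ0 μ1 : Measure (Euc d)) [IsProbabilityMeasure μ0] [IsProbabilityMeasure μ1]
    (hm0 : Integrable (fun x => ‖x‖) μ0) (hm1 : Integrable (fun x => ‖x‖) μ1)
    (μ0m μ1m : ℕ → Measure (Euc d))
    (hP0 : ∀ m, IsProbabilityMeasure (μ0m m)) (hP1 : ∀ m, IsProbabilityMeasure (μ1m m))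
    (hmom0 : ∀ m, Integrable (fun x => ‖x‖) (μ0m m))
    (hmom1 : ∀ m, Integrable (fun x => ‖x‖) (μ1m m))
    (hW0 : Tendsto (fun m => Wp 1 (μ0m m) μ0) atTop (𝓝 0))
    (hW1 : Tendsto (fun m => Wp 1 (μ1m m) μ1) atTop (𝓝 0))
    (hcvx : ∀ m, cvxOrder (μ0m m) (μ1m m))
    (μm : ℕ → Measure (Euc d × Euc d))
    (hμm : ∀ m, IsMartingaleCoupling (μm m) (μ0m m) (μ1m m)) :
    (∀ ε : ℝ, 0 < ε → ∃ K : Set (Euc d × Euc d), IsCompact K ∧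
        ∀ m, μm m Kᶜ ≤ ENNReal.ofReal ε)
    ∧ ∀ (L : Measure (Euc d × Euc d)) (φ : ℕ → ℕ), StrictMono φ →
        (∀ f : BoundedContinuousFunction (Euc d × Euc d) ℝ,
          Tendsto (fun m => ∫ z, f z ∂(μm (φ m))) atTop (𝓝 (∫ z, f z ∂L))) →
        IsMartingaleCoupling L μ0 μ1 :=
  stmt2_general μ0 μ1 hm0 hm1 μ0m μ1m hP0 hP1 hmom0 hmom1 hW0 hW1 μm hμm

end
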